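/- There exists a universal constant C > 0 such that for every n ≥ 1 and every log-concave probability measure μ on ℝⁿ, ∫_{ℝⁿ} ‖x‖⁴ dμ(x) ≤ C ( ∫_{ℝⁿ} ‖x‖² dμ(x) )². -/

import Mathlib

open MeasureTheory ProbabilityTheory

/-- Squared 2-Wasserstein distance between two measures on `ℝⁿ`:
the infimum of `∫ ‖x - y‖²` over all couplings. -/
noncomputable def W2sq {n : ℕ}
    (μ ν : Measure (EuclideanSpace ℝ (Fin n))) : ℝ :=
  sInf { c : ℝ | ∃ γ : Measure (EuclideanSpace ℝ (Fin n) × EuclideanSpace ℝ (Fin n)),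
    γ.map Prod.fst = μ ∧ γ.map Prod.snd = ν ∧ c = ∫ p, ‖p.1 - p.2‖ ^ 2 ∂γ }

/-- A measure on `ℝⁿ` is log-concave if it has density `e^{-V} 1_S` with respect to the
Lebesgue measure, where `S` is a convex set and `V` is convex on `S`. -/
def IsLogConcaveMeasure {n : ℕ} (μ : Measure (EuclideanSpace ℝ (Fin n))) : Prop :=
  ∃ (S : Set (EuclideanSpace ℝ (Fin n))) (V : EuclideanSpace ℝ (Fin n) → ℝ),
    Convex ℝ S ∧ ConvexOn ℝ S V ∧
    μ = volume.withDensity (S.indicator fun x => ENNReal.ofReal (Real.exp (-V x)))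

/-- The measure `μ` conditioned on the closed ball of radius `R` centered at the origin. -/
noncomputable def condBall {n : ℕ} (μ : Measure (EuclideanSpace ℝ (Fin n))) (R : ℝ) :
    Measure (EuclideanSpace ℝ (Fin n)) :=
  (μ (Metric.closedBall 0 R))⁻¹ • μ.restrict (Metric.closedBall 0 R)

/-!
The density `e^{-V} 1_S` of a log-concave measure is log-concave, so the measure inherits the
functional Prékopa–Leindler inequality from Lebesgue measure. On `ℝ` that inequality follows from
the layer-cake formula and the Brunn–Minkowski inequality `|A| + |B| ≤ |A + B|`; Fubini carries it
to `ℝⁿ`. Applied to indicators it gives `μ A ^ λ * μ B ^ (1 - λ) ≤ μ (λ A + (1 - λ) B)`, and taking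
for `B` a centred ball of mass at least `3/4` and for `A` the complement of a `t` times larger ball
yields Borell's lemma: the tails `μ {‖x‖ ≥ t r}` decay like `3 ^ (-(t + 1) / 2)`. By Chebyshev the
radius `r = 2 (∫ ‖x‖²)^{1/2}` qualifies, and summing the geometric tails over the shells
`k r ≤ ‖x‖ < (k + 1) r` bounds `∫ ‖x‖⁴` by a constant times `r⁴ = 16 (∫ ‖x‖²)²`.
-/

open ENNReal Set
open scoped NNReal Pointwise

namespace ENNReal

theorem min_le_rpow_mul_rpow {l : ℝ} (hl0 : 0 ≤ l) (hl1 : l ≤ 1) (a b : ℝ≥0∞) :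
    min a b ≤ a ^ l * b ^ (1 - l) :=
  calc min a b = min a b ^ l * min a b ^ (1 - l) := by
        rw [← rpow_add_of_nonneg _ _ hl0 (sub_nonneg.2 hl1), add_sub_cancel, rpow_one]
    _ ≤ a ^ l * b ^ (1 - l) := mul_le_mul' (rpow_le_rpow (min_le_left a b) hl0)
        (rpow_le_rpow (min_le_right a b) (sub_nonneg.2 hl1))

theorem rpow_mul_rpow_le_add {l : ℝ} (hl0 : 0 < l) (hl1 : l < 1) (a b : ℝ≥0∞) :
    a ^ l * b ^ (1 - l) ≤ ENNReal.ofReal l * a + ENNReal.ofReal (1 - l) * b := by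
  rcases eq_or_ne a ∞ with rfl | ha
  · simp [mul_top, hl0]
  rcases eq_or_ne b ∞ with rfl | hb
  · simp [mul_top, hl1]
  lift a to ℝ≥0 using ha
  lift b to ℝ≥0 using hb
  have := NNReal.geom_mean_le_arith_mean2_weighted ⟨l, hl0.le⟩ ⟨1 - l, sub_nonneg.2 hl1.le⟩ a b
    (Subtype.ext (add_sub_cancel l 1))
  rw [← coe_rpow_of_nonneg _ hl0.le, ← coe_rpow_of_nonneg _ (sub_nonneg.2 hl1.le),
    ofReal_eq_coe_nnreal hl0.le, ofReal_eq_coe_nnreal (sub_nonneg.2 hl1.le)]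
  exact_mod_cast this

theorem iSup_rpow {ι : Sort*} {p : ℝ} (hp : 0 < p) (a : ι → ℝ≥0∞) :
    (⨆ i, a i) ^ p = ⨆ i, a i ^ p :=
  Monotone.map_iSup_of_continuousAt (ENNReal.continuous_rpow_const.continuousAt)
    (fun _ _ h => rpow_le_rpow h hp.le) (zero_rpow_of_pos hp)

theorem iSup_mul_iSup_le_of_monotone {u v : ℕ → ℝ≥0∞} (hu : Monotone u) (hv : Monotone v)
    {c : ℝ≥0∞} (h : ∀ N, u N * v N ≤ c) : (⨆ N, u N) * ⨆ N, v N ≤ c := by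
  rw [iSup_mul]
  refine iSup_le fun i => ?_
  rw [mul_iSup]
  exact iSup_le fun j =>
    (mul_le_mul' (hu (le_max_left i j)) (hv (le_max_right i j))).trans (h (max i j))

end ENNReal

theorem lintegral_eq_lintegral_meas_ofReal_lt {α : Type*} [MeasurableSpace α] (μ : Measure α)
    {f : α → ℝ≥0∞} (hf : AEMeasurable f μ) (hf_top : ∀ x, f x ≠ ∞) :
    ∫⁻ x, f x ∂μ = ∫⁻ t in Ioi 0, μ {x | ENNReal.ofReal t < f x} :=
  calc ∫⁻ x, f x ∂μ = ∫⁻ x, ENNReal.ofReal (f x).toReal ∂μ := by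
        simp_rw [ofReal_toReal (hf_top _)]
    _ = ∫⁻ t in Ioi 0, μ {x | t < (f x).toReal} :=
        lintegral_eq_lintegral_meas_lt μ (ae_of_all _ fun _ => toReal_nonneg) hf.ennreal_toReal
    _ = ∫⁻ t in Ioi 0, μ {x | ENNReal.ofReal t < f x} :=
        setLIntegral_congr_fun measurableSet_Ioi fun t ht => by
          simp_rw [ofReal_lt_iff_lt_toReal (le_of_lt ht) (hf_top _)]

theorem lintegral_eq_iSup_lintegral_min_natCast {α : Type*} [MeasurableSpace α]
    {μ : Measure α} {f : α → ℝ≥0∞} (hf : Measurable f) :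
    ∫⁻ x, f x ∂μ = ⨆ N : ℕ, ∫⁻ x, min (f x) N ∂μ := by
  rw [← lintegral_iSup (fun N => hf.min measurable_const)
    fun i j hij x => min_le_min_left _ (Nat.cast_le.2 hij)]
  congr with x
  rw [← inf_iSup_eq, ENNReal.iSup_natCast, inf_top_eq]

namespace Real

theorem volume_add_volume_le_volume_add {K L : Set ℝ} (hK : IsCompact K) (hL : IsCompact L)
    (hK₀ : K.Nonempty) (hL₀ : L.Nonempty) : volume K + volume L ≤ volume (K + L) := by
  obtain ⟨a, haK, ha⟩ := hK.exists_isGreatest hK₀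
  obtain ⟨b, hbL, hb⟩ := hL.exists_isLeast hL₀
  -- `K + b` and `a + L` are translates of `K` and `L` inside `K + L` meeting only at `a + b`.
  have hinter : (· + b) '' K ∩ (a + ·) '' L ⊆ {a + b} := by
    rintro _ ⟨⟨k, hk, rfl⟩, m, hm, hmk⟩
    have := ha hk
    have := hb hm
    rw [mem_singleton_iff]
    linarith
  calc volume K + volume L = volume ((· + b) '' K) + volume ((a + ·) '' L) := by
        rw [image_add_right, image_add_left, measure_preimage_add_right, measure_preimage_add]
    _ = volume ((· + b) '' K ∪ (a + ·) '' L) :=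
        (measure_union₀ ((hL.image (continuous_const_add a)).measurableSet.nullMeasurableSet)
          (measure_mono_null hinter (measure_singleton _))).symm
    _ ≤ volume (K + L) := measure_mono <| union_subset
        (image_subset_iff.2 fun k hk => add_mem_add hk hbL)
        (image_subset_iff.2 fun m hm => add_mem_add haK hm)

theorem volume_add_volume_le_of_add_subset {A B C : Set ℝ} (hA : MeasurableSet A)
    (hB : MeasurableSet B) (hA₀ : A.Nonempty) (hB₀ : B.Nonempty) (hC : A + B ⊆ C) :
    volume A + volume B ≤ volume C := by
  obtain ⟨a, ha⟩ := hA₀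
  obtain ⟨b, hb⟩ := hB₀
  rw [hA.measure_eq_iSup_isCompact, hB.measure_eq_iSup_isCompact]
  simp only [iSup_and']
  refine ENNReal.biSup_add_biSup_le' ⟨∅, empty_subset _, isCompact_empty⟩
    ⟨∅, empty_subset _, isCompact_empty⟩ fun K ⟨hKA, hK⟩ L ⟨hLB, hL⟩ => ?_
  calc volume K + volume L ≤ volume (insert a K) + volume (insert b L) :=
        add_le_add (measure_mono (subset_insert _ _)) (measure_mono (subset_insert _ _))
    _ ≤ volume (insert a K + insert b L) := volume_add_volume_le_volume_add (hK.insert a)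
        (hL.insert b) (insert_nonempty _ _) (insert_nonempty _ _)
    _ ≤ volume C :=
        measure_mono ((add_subset_add (insert_subset ha hKA) (insert_subset hb hLB)).trans hC)

theorem ofReal_mul_volume_add_le {l : ℝ} (hl0 : 0 < l) (hl1 : l < 1) {A B C : Set ℝ}
    (hA : MeasurableSet A) (hB : MeasurableSet B) (hA₀ : A.Nonempty) (hB₀ : B.Nonempty)
    (hC : ∀ x ∈ A, ∀ y ∈ B, l * x + (1 - l) * y ∈ C) :
    ENNReal.ofReal l * volume A + ENNReal.ofReal (1 - l) * volume B ≤ volume C := by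
  have h := volume_add_volume_le_of_add_subset (hA.const_smul₀ l) (hB.const_smul₀ (1 - l))
    hA₀.smul_set hB₀.smul_set (by
      rintro _ ⟨_, ⟨x, hx, rfl⟩, _, ⟨y, hy, rfl⟩, rfl⟩
      exact hC x hx y hy)
  rwa [Measure.addHaar_smul_of_nonneg volume hl0.le,
    Measure.addHaar_smul_of_nonneg volume (sub_nonneg.2 hl1.le), Module.finrank_self,
    pow_one, pow_one] at h

theorem ofReal_mul_lintegral_add_le_of_iSup_eq_one {l : ℝ} (hl0 : 0 < l) (hl1 : l < 1)
    {f g h : ℝ → ℝ≥0∞} (hf : Measurable f) (hg : Measurable g) (hh : Measurable h)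
    (hf1 : ⨆ x, f x = 1) (hg1 : ⨆ x, g x = 1)
    (hfgh : ∀ x y, f x ^ l * g y ^ (1 - l) ≤ h (l * x + (1 - l) * y)) :
    ENNReal.ofReal l * (∫⁻ x, f x) + ENNReal.ofReal (1 - l) * ∫⁻ x, g x ≤ ∫⁻ x, h x := by
  have hlevel : ∀ t ∈ Ioi (0 : ℝ), ENNReal.ofReal l * volume {x | ENNReal.ofReal t < f x} +
      ENNReal.ofReal (1 - l) * volume {x | ENNReal.ofReal t < g x} ≤
        volume {x | ENNReal.ofReal t < min (h x) 1} := by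
    intro t ht
    rcases lt_or_ge t 1 with ht1 | ht1
    · have ht1' : ENNReal.ofReal t < 1 := ofReal_lt_one.2 ht1
      have hne : ∀ φ : ℝ → ℝ≥0∞, ⨆ x, φ x = 1 → {x | ENNReal.ofReal t < φ x}.Nonempty :=
        fun φ hφ => lt_iSup_iff.1 (hφ.symm ▸ ht1' : _ < ⨆ x, φ x)
      refine ofReal_mul_volume_add_le hl0 hl1 (hf measurableSet_Ioi) (hg measurableSet_Ioi)
        (hne f hf1) (hne g hg1) fun x hx y hy => ?_
      exact lt_min ((lt_min hx hy).trans_le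
        ((min_le_rpow_mul_rpow hl0.le hl1.le _ _).trans (hfgh x y))) ht1'
    · have hempty : ∀ φ : ℝ → ℝ≥0∞, ⨆ x, φ x = 1 → {x | ENNReal.ofReal t < φ x} = ∅ :=
        fun φ hφ => eq_empty_of_forall_notMem fun x hx =>
          (hx.trans_le (hφ ▸ le_iSup φ x)).not_ge (one_le_ofReal.2 ht1)
      simp [hempty f hf1, hempty g hg1]
  have hlayer : ∀ φ : ℝ → ℝ≥0∞, Measurable φ → ⨆ x, φ x = 1 →
      ∫⁻ x, φ x = ∫⁻ t in Ioi 0, volume {x | ENNReal.ofReal t < φ x} := fun φ hφ hφ1 =>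
    lintegral_eq_lintegral_meas_ofReal_lt _ hφ.aemeasurable
      fun x => ne_top_of_le_ne_top one_ne_top (hφ1 ▸ le_iSup φ x)
  calc ENNReal.ofReal l * (∫⁻ x, f x) + ENNReal.ofReal (1 - l) * ∫⁻ x, g x
      = (∫⁻ t in Ioi 0, ENNReal.ofReal l * volume {x | ENNReal.ofReal t < f x}) +
          ∫⁻ t in Ioi 0, ENNReal.ofReal (1 - l) * volume {x | ENNReal.ofReal t < g x} := by
        rw [hlayer f hf hf1, hlayer g hg hg1, lintegral_const_mul' _ _ ofReal_ne_top,
          lintegral_const_mul' _ _ ofReal_ne_top]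
    _ ≤ ∫⁻ t in Ioi 0, volume {x | ENNReal.ofReal t < min (h x) 1} :=
        le_lintegral_add _ _ |>.trans (setLIntegral_mono' measurableSet_Ioi hlevel)
    _ = ∫⁻ x, min (h x) 1 := (lintegral_eq_lintegral_meas_ofReal_lt _
        (hh.min measurable_const).aemeasurable
        fun x => ne_top_of_le_ne_top one_ne_top (min_le_right _ _)).symm
    _ ≤ ∫⁻ x, h x := lintegral_mono fun x => min_le_left _ _

theorem lintegral_rpow_mul_lintegral_rpow_le_of_iSup_ne_top {l : ℝ} (hl0 : 0 < l) (hl1 : l < 1)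
    {f g h : ℝ → ℝ≥0∞} (hf : Measurable f) (hg : Measurable g) (hh : Measurable h)
    (hf_top : ⨆ x, f x ≠ ∞) (hg_top : ⨆ x, g x ≠ ∞)
    (hfgh : ∀ x y, f x ^ l * g y ^ (1 - l) ≤ h (l * x + (1 - l) * y)) :
    (∫⁻ x, f x) ^ l * (∫⁻ x, g x) ^ (1 - l) ≤ ∫⁻ x, h x := by
  have hl1' : 0 < 1 - l := sub_pos.2 hl1
  set a := ⨆ x, f x
  set b := ⨆ x, g x
  rcases eq_or_ne a 0 with ha0 | ha0
  · simp [lintegral_congr fun x => ENNReal.iSup_eq_zero.1 ha0 x, zero_rpow_of_pos hl0]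
  rcases eq_or_ne b 0 with hb0 | hb0
  · simp [lintegral_congr fun x => ENNReal.iSup_eq_zero.1 hb0 x, zero_rpow_of_pos hl1']
  have hal0 : a ^ l ≠ 0 := (rpow_pos (pos_iff_ne_zero.2 ha0) hf_top).ne'
  have hbl0 : b ^ (1 - l) ≠ 0 := (rpow_pos (pos_iff_ne_zero.2 hb0) hg_top).ne'
  have hal_top : a ^ l ≠ ∞ := rpow_ne_top_of_nonneg hl0.le hf_top
  have hbl_top : b ^ (1 - l) ≠ ∞ := rpow_ne_top_of_nonneg hl1'.le hg_top
  set c := a ^ l * b ^ (1 - l)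
  have hc0 : c ≠ 0 := mul_ne_zero hal0 hbl0
  have hc_top : c ≠ ∞ := mul_ne_top hal_top hbl_top
  -- Rescaling `f`, `g` to supremum `1` multiplies the geometric mean by `c⁻¹`.
  have hscale : ∀ u v : ℝ≥0∞,
      (a⁻¹ * u) ^ l * (b⁻¹ * v) ^ (1 - l) = c⁻¹ * (u ^ l * v ^ (1 - l)) := by
    intro u v
    rw [mul_rpow_of_nonneg _ _ hl0.le, mul_rpow_of_nonneg _ _ hl1'.le, ENNReal.inv_rpow,
      ENNReal.inv_rpow, ENNReal.mul_inv (Or.inl hal0) (Or.inl hal_top)]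
    ring
  have key := ofReal_mul_lintegral_add_le_of_iSup_eq_one hl0 hl1 (hf.const_mul a⁻¹)
    (hg.const_mul b⁻¹) (hh.const_mul c⁻¹)
    (by rw [← ENNReal.mul_iSup]; exact ENNReal.inv_mul_cancel ha0 hf_top)
    (by rw [← ENNReal.mul_iSup]; exact ENNReal.inv_mul_cancel hb0 hg_top)
    fun x y => (hscale _ _).trans_le (mul_le_mul_right (hfgh x y) _)
  have := (rpow_mul_rpow_le_add hl0 hl1 _ _).trans key
  rw [lintegral_const_mul' _ _ (inv_ne_top.2 ha0), lintegral_const_mul' _ _ (inv_ne_top.2 hb0),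
    lintegral_const_mul' _ _ (inv_ne_top.2 hc0), hscale] at this
  exact (ENNReal.mul_le_mul_iff_right (ENNReal.inv_ne_zero.2 hc_top) (inv_ne_top.2 hc0)).1 this

end Real

namespace MeasureTheory.Measure

def IsPrekopaLeindler {E : Type*} [MeasurableSpace E] [AddCommMonoid E] [Module ℝ E]
    (μ : Measure E) : Prop :=
  ∀ l : ℝ, 0 < l → l < 1 → ∀ f g h : E → ℝ≥0∞, Measurable f → Measurable g → Measurable h →
    (∀ x y, f x ^ l * g y ^ (1 - l) ≤ h (l • x + (1 - l) • y)) →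
      (∫⁻ x, f x ∂μ) ^ l * (∫⁻ x, g x ∂μ) ^ (1 - l) ≤ ∫⁻ x, h x ∂μ

theorem isPrekopaLeindler_volume_real : (volume : Measure ℝ).IsPrekopaLeindler := by
  intro l hl0 hl1 f g h hf hg hh hfgh
  have hbounded : ∀ N : ℕ,
      (∫⁻ x, min (f x) N) ^ l * (∫⁻ x, min (g x) N) ^ (1 - l) ≤ ∫⁻ x, h x := fun N =>
    Real.lintegral_rpow_mul_lintegral_rpow_le_of_iSup_ne_top hl0 hl1
      (hf.min measurable_const) (hg.min measurable_const) hh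
      (ne_top_of_le_ne_top (natCast_ne_top N) (iSup_le fun _ => min_le_right _ _))
      (ne_top_of_le_ne_top (natCast_ne_top N) (iSup_le fun _ => min_le_right _ _))
      fun x y => (mul_le_mul' (rpow_le_rpow (min_le_left _ _) hl0.le)
        (rpow_le_rpow (min_le_left _ _) (sub_nonneg.2 hl1.le))).trans (hfgh x y)
  have hmono : ∀ (φ : ℝ → ℝ≥0∞) {p : ℝ}, 0 ≤ p → Monotone fun N : ℕ => (∫⁻ x, min (φ x) N) ^ p :=
    fun φ _ hp _ _ hij => rpow_le_rpow
      (lintegral_mono fun _ => min_le_min_left _ (Nat.cast_le.2 hij)) hp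
  rw [lintegral_eq_iSup_lintegral_min_natCast hf, lintegral_eq_iSup_lintegral_min_natCast hg,
    ENNReal.iSup_rpow hl0, ENNReal.iSup_rpow (sub_pos.2 hl1)]
  exact ENNReal.iSup_mul_iSup_le_of_monotone (hmono f hl0.le) (hmono g (sub_nonneg.2 hl1.le))
    hbounded

namespace IsPrekopaLeindler

variable {E F : Type*} [MeasurableSpace E] [AddCommMonoid E] [Module ℝ E]
  [MeasurableSpace F] [AddCommMonoid F] [Module ℝ F] {μ : Measure E} {ν : Measure F}

theorem prod [SFinite ν] (hμ : μ.IsPrekopaLeindler) (hν : ν.IsPrekopaLeindler) :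
    (μ.prod ν).IsPrekopaLeindler := by
  intro l hl0 hl1 f g h hf hg hh hfgh
  rw [lintegral_prod f hf.aemeasurable, lintegral_prod g hg.aemeasurable,
    lintegral_prod h hh.aemeasurable]
  refine hμ l hl0 hl1 _ _ _ hf.lintegral_prod_right' hg.lintegral_prod_right'
    hh.lintegral_prod_right' fun x₁ x₂ => ?_
  refine hν l hl0 hl1 _ _ _ (hf.comp measurable_prodMk_left) (hg.comp measurable_prodMk_left)
    (hh.comp measurable_prodMk_left) fun y₁ y₂ => ?_
  simpa only [Prod.smul_mk, Prod.mk_add_mk] using hfgh (x₁, y₁) (x₂, y₂)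

theorem of_measurePreserving (hμ : μ.IsPrekopaLeindler) (e : E →ₗ[ℝ] F)
    (he : MeasurePreserving e μ ν) : ν.IsPrekopaLeindler := by
  intro l hl0 hl1 f g h hf hg hh hfgh
  rw [← he.lintegral_comp hf, ← he.lintegral_comp hg, ← he.lintegral_comp hh]
  refine hμ l hl0 hl1 _ _ _ (hf.comp he.measurable) (hg.comp he.measurable)
    (hh.comp he.measurable) fun x y => ?_
  simpa only [Function.comp_apply, map_add, map_smul] using hfgh (e x) (e y)

theorem withDensity (hμ : μ.IsPrekopaLeindler) {ρ : E → ℝ≥0∞} (hρ : Measurable ρ)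
    (hρ_lc : ∀ l : ℝ, 0 < l → l < 1 → ∀ x y, ρ x ^ l * ρ y ^ (1 - l) ≤ ρ (l • x + (1 - l) • y)) :
    (μ.withDensity ρ).IsPrekopaLeindler := by
  intro l hl0 hl1 f g h hf hg hh hfgh
  rw [lintegral_withDensity_eq_lintegral_mul _ hρ hf,
    lintegral_withDensity_eq_lintegral_mul _ hρ hg, lintegral_withDensity_eq_lintegral_mul _ hρ hh]
  refine hμ l hl0 hl1 _ _ _ (hρ.mul hf) (hρ.mul hg) (hρ.mul hh) fun x y => ?_
  calc (ρ * f) x ^ l * (ρ * g) y ^ (1 - l)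
      = ρ x ^ l * ρ y ^ (1 - l) * (f x ^ l * g y ^ (1 - l)) := by
        simp only [Pi.mul_apply, mul_rpow_of_nonneg _ _ hl0.le,
          mul_rpow_of_nonneg _ _ (sub_nonneg.2 hl1.le)]
        ring
    _ ≤ (ρ * h) (l • x + (1 - l) • y) := mul_le_mul' (hρ_lc l hl0 hl1 x y) (hfgh x y)

theorem measure_rpow_mul_rpow_le (hμ : μ.IsPrekopaLeindler) {l : ℝ} (hl0 : 0 < l) (hl1 : l < 1)
    {A B C : Set E} (hA : MeasurableSet A) (hB : MeasurableSet B) (hC : MeasurableSet C)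
    (hABC : ∀ x ∈ A, ∀ y ∈ B, l • x + (1 - l) • y ∈ C) : μ A ^ l * μ B ^ (1 - l) ≤ μ C := by
  rw [← lintegral_indicator_one hA, ← lintegral_indicator_one hB, ← lintegral_indicator_one hC]
  refine hμ l hl0 hl1 _ _ _ (measurable_one.indicator hA) (measurable_one.indicator hB)
    (measurable_one.indicator hC) fun x y => ?_
  by_cases hx : x ∈ A
  · by_cases hy : y ∈ B
    · simp [hx, hy, hABC x hx y hy]
    · simp [hy, zero_rpow_of_pos (sub_pos.2 hl1)]
  · simp [hx, zero_rpow_of_pos hl0]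

theorem measureReal_rpow_mul_rpow_le [IsFiniteMeasure μ] (hμ : μ.IsPrekopaLeindler) {l : ℝ}
    (hl0 : 0 < l) (hl1 : l < 1) {A B C : Set E} (hA : MeasurableSet A) (hB : MeasurableSet B)
    (hC : MeasurableSet C) (hABC : ∀ x ∈ A, ∀ y ∈ B, l • x + (1 - l) • y ∈ C) :
    μ.real A ^ l * μ.real B ^ (1 - l) ≤ μ.real C := by
  have := toReal_mono (measure_ne_top μ C) (hμ.measure_rpow_mul_rpow_le hl0 hl1 hA hB hC hABC)
  rwa [toReal_mul, ← toReal_rpow, ← toReal_rpow] at this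

end IsPrekopaLeindler

theorem isPrekopaLeindler_volume_pi (n : ℕ) : (volume : Measure (Fin n → ℝ)).IsPrekopaLeindler := by
  induction n with
  | zero =>
    intro l hl0 hl1 f g h hf hg hh hfgh
    simp only [lintegral_unique, volume_pi, pi_univ, Finset.univ_eq_empty, Finset.prod_empty,
      mul_one]
    convert hfgh default default
  | succ n ih =>
    have hcons : ⇑(Fin.consLinearEquiv ℝ fun _ : Fin (n + 1) => ℝ) =
        (MeasurableEquiv.piFinSuccAbove (fun _ : Fin (n + 1) => ℝ) 0).symm := by
      funext p
      simp
      rfl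
    refine (isPrekopaLeindler_volume_real.prod ih).of_measurePreserving
      (Fin.consLinearEquiv ℝ fun _ : Fin (n + 1) => ℝ).toLinearMap ?_
    rw [LinearEquiv.coe_coe, hcons]
    exact (volume_preserving_piFinSuccAbove (fun _ : Fin (n + 1) => ℝ) 0).symm

theorem isPrekopaLeindler_volume_euclideanSpace (n : ℕ) :
    (volume : Measure (EuclideanSpace ℝ (Fin n))).IsPrekopaLeindler :=
  (isPrekopaLeindler_volume_pi n).of_measurePreserving
    (WithLp.linearEquiv 2 ℝ (Fin n → ℝ)).symm.toLinearMap (PiLp.volume_preserving_toLp (Fin n))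

end MeasureTheory.Measure

open Measure

section LogConcave

variable {E : Type*} [NormedAddCommGroup E] [NormedSpace ℝ E] {U : Set E} {V : E → ℝ}

theorem ConvexOn.measurable_indicator_ofReal_exp_neg [FiniteDimensional ℝ E] [MeasurableSpace E]
    [OpensMeasurableSpace E] (hU : IsOpen U) (hV : ConvexOn ℝ U V) :
    Measurable (U.indicator fun x => ENNReal.ofReal (Real.exp (-V x))) := by
  classical
  rw [← piecewise_eq_indicator]
  exact ContinuousOn.measurable_piecewise (ENNReal.continuous_ofReal.comp_continuousOn
    (Real.continuous_exp.comp_continuousOn (hV.continuousOn hU).neg)) continuousOn_const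
    hU.measurableSet

theorem ConvexOn.indicator_ofReal_exp_neg_rpow_mul_rpow_le (hV : ConvexOn ℝ U V) {l : ℝ}
    (hl0 : 0 < l) (hl1 : l < 1) (x y : E) :
    (U.indicator fun x => ENNReal.ofReal (Real.exp (-V x))) x ^ l *
        (U.indicator fun x => ENNReal.ofReal (Real.exp (-V x))) y ^ (1 - l) ≤
      (U.indicator fun x => ENNReal.ofReal (Real.exp (-V x))) (l • x + (1 - l) • y) := by
  by_cases hx : x ∈ U
  swap
  · simp [hx, zero_rpow_of_pos hl0]
  by_cases hy : y ∈ U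
  swap
  · simp [hy, zero_rpow_of_pos (sub_pos.2 hl1)]
  have hconv := hV.2 hx hy hl0.le (sub_nonneg.2 hl1.le) (add_sub_cancel l 1)
  rw [indicator_of_mem hx, indicator_of_mem hy,
    indicator_of_mem (hV.1 hx hy hl0.le (sub_nonneg.2 hl1.le) (add_sub_cancel l 1)),
    ofReal_rpow_of_nonneg (Real.exp_nonneg _) hl0.le,
    ofReal_rpow_of_nonneg (Real.exp_nonneg _) (sub_nonneg.2 hl1.le),
    ← ofReal_mul (Real.rpow_nonneg (Real.exp_nonneg _) _), ← Real.exp_mul, ← Real.exp_mul,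
    ← Real.exp_add]
  simp only [smul_eq_mul] at hconv
  exact ofReal_le_ofReal (Real.exp_le_exp.2 (by linarith))

end LogConcave

theorem IsLogConcaveMeasure.isPrekopaLeindler {n : ℕ} {μ : Measure (EuclideanSpace ℝ (Fin n))}
    (hμ : IsLogConcaveMeasure μ) : μ.IsPrekopaLeindler := by
  obtain ⟨S, V, hS, hV, rfl⟩ := hμ
  -- `S` differs from its interior by the null frontier, and on the interior the density is
  -- continuous, hence measurable.
  rw [withDensity_congr_ae (indicator_ae_eq_of_ae_eq_set
    (interior_ae_eq_of_null_frontier (hS.addHaar_frontier volume)).symm)]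
  have hV' := hV.subset interior_subset hS.interior
  exact (isPrekopaLeindler_volume_euclideanSpace n).withDensity
    (hV'.measurable_indicator_ofReal_exp_neg isOpen_interior)
    fun _ hl0 hl1 => hV'.indicator_ofReal_exp_neg_rpow_mul_rpow_le hl0 hl1

theorem summable_succ_pow_mul_geometric (j : ℕ) {q : ℝ} (hq0 : 0 < q) (hq1 : q < 1) :
    Summable fun k : ℕ => ((k : ℝ) + 1) ^ j * q ^ k := by
  have h := (summable_nat_add_iff (f := fun k : ℕ => (k : ℝ) ^ j * q ^ k) 1).2
    (summable_pow_mul_geometric_of_norm_lt_one j (by rwa [Real.norm_eq_abs, abs_of_pos hq0]))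
  refine (h.mul_right q⁻¹).congr fun k => ?_
  rw [Nat.cast_add_one, pow_succ, mul_assoc, mul_assoc, mul_inv_cancel₀ hq0.ne', mul_one]

theorem lintegral_ofReal_pow_le_of_geometric_tail {α : Type*} [MeasurableSpace α]
    {μ : Measure α} {g : α → ℝ} (hg : Measurable g) (hg0 : ∀ x, 0 ≤ g x) {r q : ℝ} (hr : 0 < r)
    (hq0 : 0 < q) (hq1 : q < 1) (htail : ∀ k : ℕ, μ {x | k * r ≤ g x} ≤ ENNReal.ofReal (q ^ k))
    (j : ℕ) :
    ∫⁻ x, ENNReal.ofReal (g x ^ j) ∂μ ≤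
      ENNReal.ofReal (r ^ j * ∑' k : ℕ, ((k : ℝ) + 1) ^ j * q ^ k) := by
  have hmeas : ∀ k : ℕ, MeasurableSet {x | k * r ≤ g x} := fun k =>
    measurableSet_le measurable_const hg
  -- Each point lies in the shell `k r ≤ g x < (k + 1) r` for `k = ⌊g x / r⌋`.
  have hpoint : ∀ x, ENNReal.ofReal (g x ^ j) ≤
      ∑' k : ℕ, {x | k * r ≤ g x}.indicator (fun _ => ENNReal.ofReal (((k + 1) * r) ^ j)) x := by
    intro x
    have hk : (⌊g x / r⌋₊ : ℝ) * r ≤ g x :=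
      (le_div_iff₀ hr).1 (Nat.floor_le (div_nonneg (hg0 x) hr.le))
    have hk' : g x < (⌊g x / r⌋₊ + 1) * r := (div_lt_iff₀ hr).1 (Nat.lt_floor_add_one _)
    refine le_trans ?_ (ENNReal.le_tsum ⌊g x / r⌋₊)
    rw [indicator_of_mem (show x ∈ {y | (⌊g x / r⌋₊ : ℝ) * r ≤ g y} from hk)]
    exact ofReal_le_ofReal (pow_le_pow_left₀ (hg0 x) hk'.le j)
  calc ∫⁻ x, ENNReal.ofReal (g x ^ j) ∂μ
      ≤ ∑' k : ℕ, ENNReal.ofReal (((k + 1) * r) ^ j) * μ {x | k * r ≤ g x} := by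
        refine (lintegral_mono hpoint).trans_eq ?_
        rw [lintegral_tsum fun k => (measurable_const.indicator (hmeas k)).aemeasurable]
        simp_rw [lintegral_indicator_const (hmeas _)]
    _ ≤ ∑' k : ℕ, ENNReal.ofReal (r ^ j * (((k : ℝ) + 1) ^ j * q ^ k)) := by
        refine ENNReal.tsum_le_tsum fun k => (mul_le_mul_right (htail k) _).trans_eq ?_
        rw [← ofReal_mul (by positivity), mul_pow]
        congr 1
        ring
    _ = ENNReal.ofReal (r ^ j * ∑' k : ℕ, ((k : ℝ) + 1) ^ j * q ^ k) := by
        rw [← ofReal_tsum_of_nonneg (fun k => by positivity)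
          ((summable_succ_pow_mul_geometric j hq0 hq1).mul_left _), tsum_mul_left]

-- `4 ^ p` comes from the radius `2 √m` with `m = ∫ ‖x‖ ^ 2`, and `√(1 / 3)` is the rate of the
-- geometric tails in Borell's lemma.
noncomputable def momentComparisonConst (p : ℕ) : ℝ :=
  4 ^ p * ∑' k : ℕ, ((k : ℝ) + 1) ^ (2 * p) * √(1 / 3) ^ k

theorem momentComparisonConst_pos (p : ℕ) : 0 < momentComparisonConst p :=
  mul_pos (by positivity) (Summable.tsum_pos (summable_succ_pow_mul_geometric _ (by positivity)
    ((Real.sqrt_lt' one_pos).2 (by norm_num))) (fun k => by positivity) 0 (by simp))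

theorem measureReal_compl_ball_le_integral_norm_sq_div {E : Type*} [NormedAddCommGroup E]
    [MeasurableSpace E] {μ : Measure E}
    (hint : Integrable (fun x => ‖x‖ ^ 2) μ) {r : ℝ} (hr : 0 < r) :
    μ.real (Metric.ball (0 : E) r)ᶜ ≤ (∫ x, ‖x‖ ^ 2 ∂μ) / r ^ 2 := by
  have hset : (Metric.ball (0 : E) r)ᶜ = {x | r ^ 2 ≤ ‖x‖ ^ 2} := by
    ext x
    simp [pow_le_pow_iff_left₀ hr.le (norm_nonneg x) two_ne_zero]
  rw [hset, le_div_iff₀ (by positivity), mul_comm]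
  exact mul_meas_ge_le_integral_of_nonneg (ae_of_all _ fun x => by positivity) hint _

section NormedSpace

open Metric

variable {E : Type*} [NormedAddCommGroup E] [NormedSpace ℝ E] [MeasurableSpace E]
  [OpensMeasurableSpace E] {μ : Measure E}

namespace MeasureTheory.Measure.IsPrekopaLeindler

/-- Borell's lemma. -/
theorem measureReal_compl_ball_le [IsProbabilityMeasure μ] (hμ : μ.IsPrekopaLeindler) {r : ℝ}
    (hr : μ.real (ball (0 : E) r)ᶜ ≤ 1 / 4) {t : ℝ} (ht : 1 ≤ t) :
    μ.real (ball (0 : E) (t * r))ᶜ ≤ (1 / 3) ^ ((t + 1) / 2) := by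
  rcases ht.eq_or_lt with rfl | ht
  · norm_num at hr ⊢
    linarith
  set l := 2 / (t + 1)
  have hl0 : 0 < l := by positivity
  have hl1 : l < 1 := (div_lt_one (by linarith)).2 (by linarith)
  have hlt : l * (t + 1) = 2 := div_mul_cancel₀ _ (by linarith)
  -- The weight `l` is chosen so that `l * (t * r) - (1 - l) * r = r`.
  have hcomb : ∀ x ∈ (ball (0 : E) (t * r))ᶜ, ∀ y ∈ ball (0 : E) r,
      l • x + (1 - l) • y ∈ (ball (0 : E) r)ᶜ := by
    intro x hx y hy
    simp only [mem_compl_iff, mem_ball_zero_iff, not_lt] at hx hy ⊢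
    have := norm_sub_le (l • x + (1 - l) • y) ((1 - l) • y)
    rw [add_sub_cancel_right, norm_smul, norm_smul, Real.norm_of_nonneg hl0.le,
      Real.norm_of_nonneg (sub_nonneg.2 hl1.le)] at this
    have hlx := mul_le_mul_of_nonneg_left hx hl0.le
    have hly := mul_lt_mul_of_pos_left hy (sub_pos.2 hl1)
    have hr : l * (t * r) - (1 - l) * r = r := by linear_combination r * hlt
    linarith
  have hPL := hμ.measureReal_rpow_mul_rpow_le hl0 hl1 measurableSet_ball.compl
    measurableSet_ball measurableSet_ball.compl hcomb
  have hball : 3 / 4 ≤ μ.real (ball (0 : E) r) := by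
    rw [measureReal_compl measurableSet_ball, probReal_univ] at hr
    linarith
  set a := μ.real (ball (0 : E) (t * r))ᶜ
  have ha : a ^ l ≤ 1 / 3 := by
    have h34 : 3 / 4 ≤ μ.real (ball (0 : E) r) ^ (1 - l) :=
      (Real.self_le_rpow_of_le_one (by norm_num) (by norm_num) (by linarith)).trans
        (Real.rpow_le_rpow (by norm_num) hball (by linarith))
    nlinarith [Real.rpow_nonneg (measureReal_nonneg : 0 ≤ a) l]
  calc a = (a ^ l) ^ l⁻¹ := (Real.rpow_rpow_inv measureReal_nonneg hl0.ne').symm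
    _ ≤ (1 / 3) ^ l⁻¹ := Real.rpow_le_rpow (by positivity) ha (by positivity)
    _ = (1 / 3) ^ ((t + 1) / 2) := by rw [inv_div]

theorem measure_natCast_mul_le_norm_le [IsProbabilityMeasure μ] (hμ : μ.IsPrekopaLeindler) {r : ℝ}
    (hr : μ.real (ball (0 : E) r)ᶜ ≤ 1 / 4) (k : ℕ) :
    μ {x | k * r ≤ ‖x‖} ≤ ENNReal.ofReal (√(1 / 3) ^ k) := by
  rcases k.eq_zero_or_pos with rfl | hk
  · simp
  have hset : {x | k * r ≤ ‖x‖} = (ball (0 : E) (k * r))ᶜ := by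
    ext x
    simp
  rw [hset, ← ofReal_measureReal]
  refine ofReal_le_ofReal ((hμ.measureReal_compl_ball_le hr (Nat.one_le_cast.2 hk)).trans ?_)
  calc (1 / 3 : ℝ) ^ (((k : ℝ) + 1) / 2) ≤ (1 / 3) ^ ((k : ℝ) / 2) :=
        Real.rpow_le_rpow_of_exponent_ge (by norm_num) (by norm_num) (by linarith)
    _ = √(1 / 3) ^ k := by
        rw [Real.sqrt_eq_rpow, ← Real.rpow_natCast, ← Real.rpow_mul (by norm_num)]
        ring_nf

theorem integral_norm_pow_le_of_integral_norm_sq_pos [IsProbabilityMeasure μ]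
    (hμ : μ.IsPrekopaLeindler) (hint : Integrable (fun x => ‖x‖ ^ 2) μ)
    (hm : 0 < ∫ x, ‖x‖ ^ 2 ∂μ) (j : ℕ) :
    ∫ x, ‖x‖ ^ j ∂μ ≤
      (2 * √(∫ x, ‖x‖ ^ 2 ∂μ)) ^ j * ∑' k : ℕ, ((k : ℝ) + 1) ^ j * √(1 / 3) ^ k := by
  have hr : 0 < 2 * √(∫ x, ‖x‖ ^ 2 ∂μ) := by positivity
  have hball : μ.real (ball (0 : E) (2 * √(∫ x, ‖x‖ ^ 2 ∂μ)))ᶜ ≤ 1 / 4 :=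
    (measureReal_compl_ball_le_integral_norm_sq_div hint hr).trans_eq (by
      rw [mul_pow, Real.sq_sqrt hm.le]
      field_simp
      norm_num)
  rw [integral_eq_lintegral_of_nonneg_ae (f := fun x => ‖x‖ ^ j)
    (ae_of_all _ fun x => by positivity) (continuous_norm.pow _).aestronglyMeasurable]
  exact ENNReal.toReal_le_of_le_ofReal (by positivity)
    (lintegral_ofReal_pow_le_of_geometric_tail continuous_norm.measurable norm_nonneg hr
      (by positivity) ((Real.sqrt_lt' one_pos).2 (by norm_num))
      (hμ.measure_natCast_mul_le_norm_le hball) j)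

theorem integral_norm_pow_le [IsProbabilityMeasure μ] (hμ : μ.IsPrekopaLeindler) {p : ℕ}
    (hp : 1 ≤ p) : ∫ x, ‖x‖ ^ (2 * p) ∂μ ≤ momentComparisonConst p * (∫ x, ‖x‖ ^ 2 ∂μ) ^ p := by
  have hm0 : 0 ≤ ∫ x, ‖x‖ ^ 2 ∂μ := integral_nonneg fun x => by positivity
  have hrhs : 0 ≤ momentComparisonConst p * (∫ x, ‖x‖ ^ 2 ∂μ) ^ p :=
    mul_nonneg (momentComparisonConst_pos p).le (pow_nonneg hm0 p)
  by_cases hint : Integrable (fun x => ‖x‖ ^ (2 * p)) μ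
  swap
  · rwa [integral_undef hint]
  have hint2 : Integrable (fun x => ‖x‖ ^ 2) μ := by
    refine ((integrable_const 1).add hint).mono' (continuous_norm.pow 2).aestronglyMeasurable
      (ae_of_all _ fun x => ?_)
    rw [Real.norm_of_nonneg (by positivity), Pi.add_apply]
    rcases le_total ‖x‖ 1 with hx | hx
    · nlinarith [pow_le_one₀ (norm_nonneg x) hx (n := 2), pow_nonneg (norm_nonneg x) (2 * p)]
    · linarith [pow_le_pow_right₀ hx (by omega : 2 ≤ 2 * p)]
  rcases hm0.eq_or_lt with hm | hm
  · have h0 : (fun x => ‖x‖ ^ 2) =ᵐ[μ] 0 :=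
      (integral_eq_zero_iff_of_nonneg (fun x => by positivity) hint2).1 hm.symm
    rwa [integral_eq_zero_of_ae (h0.mono fun x hx => by
      simp only [Pi.zero_apply] at hx ⊢
      rw [pow_mul, hx, zero_pow (by omega)])]
  calc ∫ x, ‖x‖ ^ (2 * p) ∂μ
      ≤ (2 * √(∫ x, ‖x‖ ^ 2 ∂μ)) ^ (2 * p) *
          ∑' k : ℕ, ((k : ℝ) + 1) ^ (2 * p) * √(1 / 3) ^ k :=
        hμ.integral_norm_pow_le_of_integral_norm_sq_pos hint2 hm (2 * p)
    _ = momentComparisonConst p * (∫ x, ‖x‖ ^ 2 ∂μ) ^ p := by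
        rw [pow_mul, mul_pow, Real.sq_sqrt hm0, momentComparisonConst, mul_pow]
        ring

end MeasureTheory.Measure.IsPrekopaLeindler

end NormedSpace

/-- **Reverse Hölder / Borell moment comparison for log-concave measures.**
There is a universal constant `C > 0` such that every log-concave probability measure `μ`
on `ℝⁿ` satisfies `∫ ‖x‖⁴ dμ ≤ C (∫ ‖x‖² dμ)²`. -/
theorem fourth_moment_le_sq_second_moment :
    ∃ C : ℝ, 0 < C ∧
      ∀ (n : ℕ), 1 ≤ n →
        ∀ μ : Measure (EuclideanSpace ℝ (Fin n)), IsProbabilityMeasure μ →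
          IsLogConcaveMeasure μ →
          (∫ x, ‖x‖ ^ 4 ∂μ) ≤ C * (∫ x, ‖x‖ ^ 2 ∂μ) ^ 2 :=
  ⟨momentComparisonConst 2, momentComparisonConst_pos 2, fun _ _ _ _ hμ =>
    hμ.isPrekopaLeindler.integral_norm_pow_le one_le_two⟩
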